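/- Suppose for every z ∈ Z the loss F(·, z) is L-Lipschitz and β-smooth (no convexity assumed), and run SGD with constant step size 0 < α ≤ c/T for T steps on the neighbouring datasets S and S', with window size k ≤ T. Then for every t_0 with k ≤ t_0 ≤ T, the conditional expectation of the averaged parameter distance given the event A_{t_0} that the differing index j is never sampled at steps t ≤ t_0 satisfies E_I[ δ̄_T | A_{t_0} ] ≤ (2L(1 + k e^{cβ}) / ((n−1)β)) · (T/t_0)^{cβ/k}, where δ̄_T(I) = (1/k) Σ_{i=T−k+1}^T ‖w_i(I) − w_i'(I)‖. -/

import Mathlib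

set_option maxHeartbeats 1000000 in
/-- **Main technical estimate in the proof of Theorem 4.4 (non-convex case).** For an
`L`-Lipschitz, `β`-smooth (not necessarily convex) loss, running SGD with constant step size
`0 < α ≤ c/T` for `T` steps on neighbouring datasets, for every `k ≤ t₀ ≤ T` the conditional
expectation of the averaged parameter distance given the event `A_{t₀}` (the differing index
`j` is never sampled at steps `t ≤ t₀`) satisfies
`E_I[δ̄_T | A_{t₀}] ≤ (2L(1 + k e^{cβ}) / ((n-1)β)) (T/t₀)^{cβ/k}`. -/
theorem sewa_nonconvex_conditional_parameter_stability
    {E : Type*} [NormedAddCommGroup E] [InnerProductSpace ℝ E]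
    {Z : Type*} (F : E → Z → ℝ) (gradF : E → Z → E)
    (L β c : ℝ) (hL : 0 < L) (hβ : 0 < β) (hc : 0 < c)
    (hdiff : ∀ (z : Z) (x : E), HasFDerivAt (fun u => F u z) ((innerSL ℝ) (gradF x z)) x)
    (hLip : ∀ (z : Z) (u v : E), |F u z - F v z| ≤ L * ‖u - v‖)
    (hsmooth : ∀ (z : Z) (u v : E), ‖gradF u z - gradF v z‖ ≤ β * ‖u - v‖)
    (n : ℕ) (hn : 2 ≤ n) (S S' : Fin n → Z) (j : Fin n)
    (hSS' : ∀ i, i ≠ j → S i = S' i)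
    (T k : ℕ) (hk : 1 ≤ k) (hkT : k ≤ T)
    (α : ℝ) (hα : 0 < α) (hα2 : α ≤ c / T)
    (w0 : E) (w w' : (Fin (T + 1) → Fin n) → ℕ → E)
    (hw1 : ∀ I, w I 1 = w0) (hw1' : ∀ I, w' I 1 = w0)
    (hwrec : ∀ I, ∀ t, ∀ (h2 : 2 ≤ t) (hT' : t ≤ T),
      w I t = w I (t - 1) - α • gradF (w I (t - 1)) (S (I ⟨t, by omega⟩)))
    (hwrec' : ∀ I, ∀ t, ∀ (h2 : 2 ≤ t) (hT' : t ≤ T),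
      w' I t = w' I (t - 1) - α • gradF (w' I (t - 1)) (S' (I ⟨t, by omega⟩)))
    (t₀ : ℕ) (ht₀ : k ≤ t₀) (ht₀T : t₀ ≤ T) :
    (∑ I ∈ Finset.univ.filter
          (fun I : Fin (T + 1) → Fin n =>
            ∀ t : Fin (T + 1), 2 ≤ (t : ℕ) → (t : ℕ) ≤ t₀ → I t ≠ j),
        ((1 : ℝ) / k) * ∑ i : Fin k, ‖w I (T - k + 1 + i) - w' I (T - k + 1 + i)‖) /
      ((Finset.univ.filter
          (fun I : Fin (T + 1) → Fin n =>
            ∀ t : Fin (T + 1), 2 ≤ (t : ℕ) → (t : ℕ) ≤ t₀ → I t ≠ j)).card : ℝ)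
      ≤ (2 * L * (1 + (k : ℝ) * Real.exp (c * β)) / (((n : ℝ) - 1) * β)) *
          ((T : ℝ) / (t₀ : ℝ)) ^ (c * β / k) := by
  classical
  have hT1 : 1 ≤ T := le_trans hk hkT
  have hTpos : (0 : ℝ) < T := by exact_mod_cast Nat.lt_of_lt_of_le Nat.zero_lt_one hT1
  have hαT : α * T ≤ c := by
    have := (le_div_iff₀ hTpos).mp hα2
    linarith
  set q : ℝ := 1 + α * β with hq_def
  have hq1 : 1 ≤ q := by nlinarith
  have hq0 : (0 : ℝ) < q := by linarith
  -- gradient bound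
  have hgrad : ∀ (z : Z) (x : E), ‖gradF x z‖ ≤ L := by
    intro z x
    have hlip : LipschitzWith (Real.toNNReal L) (fun u => F u z) := by
      apply LipschitzWith.of_dist_le_mul
      intro u v
      rw [Real.dist_eq, dist_eq_norm, Real.coe_toNNReal _ hL.le]
      exact hLip z u v
    have h := (hdiff z x).le_of_lipschitz hlip
    rwa [innerSL_apply_norm, Real.coe_toNNReal _ hL.le] at h
  have hqT : ∀ m : ℕ, m ≤ T → q ^ m ≤ Real.exp (c * β) := by
    intro m hm
    calc q ^ m ≤ q ^ T := pow_le_pow_right₀ hq1 hm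
      _ ≤ (Real.exp (α * β)) ^ T := by
          apply pow_le_pow_left₀ hq0.le
          have := Real.add_one_le_exp (α * β)
          linarith
      _ = Real.exp ((T : ℝ) * (α * β)) := by rw [← Real.exp_nat_mul]
      _ ≤ Real.exp (c * β) := by
          apply Real.exp_le_exp.mpr
          nlinarith
  set A := Finset.univ.filter
      (fun I : Fin (T + 1) → Fin n =>
        ∀ t : Fin (T + 1), 2 ≤ (t : ℕ) → (t : ℕ) ≤ t₀ → I t ≠ j) with hA_def
  -- indicator of sampling the differing index at step s
  set χ : (Fin (T + 1) → Fin n) → ℕ → ℝ := fun I s =>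
    if hs : s ≤ T then (if I ⟨s, Nat.lt_succ_of_le hs⟩ = j then 1 else 0) else 0 with hχ_def
  have hχ_nonneg : ∀ I s, 0 ≤ χ I s := by
    intro I s
    simp only [hχ_def]
    split_ifs <;> norm_num
  -- one-step recursion
  have hstep : ∀ I, ∀ t, 2 ≤ t → t ≤ T →
      ‖w I t - w' I t‖ ≤ q * ‖w I (t - 1) - w' I (t - 1)‖ + 2 * α * L * χ I t := by
    intro I t h2 hT'
    have hfin : t < T + 1 := by omega
    rw [hwrec I t h2 hT', hwrec' I t h2 hT']
    set u := w I (t - 1)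
    set v := w' I (t - 1)
    have hDnn : (0 : ℝ) ≤ ‖u - v‖ := norm_nonneg _
    by_cases hij : I ⟨t, hfin⟩ = j
    · have hχ1 : χ I t = 1 := by
        simp only [hχ_def]
        rw [dif_pos hT', if_pos hij]
      rw [hχ1]
      have e : (u - α • gradF u (S (I ⟨t, hfin⟩))) - (v - α • gradF v (S' (I ⟨t, hfin⟩)))
          = (u - v) + (α • gradF v (S' (I ⟨t, hfin⟩)) - α • gradF u (S (I ⟨t, hfin⟩))) := by
        abel
      calc ‖(u - α • gradF u (S (I ⟨t, hfin⟩))) - (v - α • gradF v (S' (I ⟨t, hfin⟩)))‖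
          ≤ ‖u - v‖ + ‖α • gradF v (S' (I ⟨t, hfin⟩)) - α • gradF u (S (I ⟨t, hfin⟩))‖ := by
            rw [e]; exact norm_add_le _ _
        _ ≤ ‖u - v‖ + (‖α • gradF v (S' (I ⟨t, hfin⟩))‖ + ‖α • gradF u (S (I ⟨t, hfin⟩))‖) := by
            have := norm_sub_le (α • gradF v (S' (I ⟨t, hfin⟩))) (α • gradF u (S (I ⟨t, hfin⟩)))
            linarith
        _ ≤ ‖u - v‖ + (α * L + α * L) := by
            have h1 : ‖α • gradF v (S' (I ⟨t, hfin⟩))‖ ≤ α * L := by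
              rw [norm_smul, Real.norm_eq_abs, abs_of_pos hα]
              exact mul_le_mul_of_nonneg_left (hgrad _ _) hα.le
            have h2' : ‖α • gradF u (S (I ⟨t, hfin⟩))‖ ≤ α * L := by
              rw [norm_smul, Real.norm_eq_abs, abs_of_pos hα]
              exact mul_le_mul_of_nonneg_left (hgrad _ _) hα.le
            linarith
        _ ≤ q * ‖u - v‖ + 2 * α * L * 1 := by nlinarith
    · have hχ0 : χ I t = 0 := by
        simp only [hχ_def]
        rw [dif_pos hT', if_neg hij]
      rw [hχ0]
      have hz : S (I ⟨t, hfin⟩) = S' (I ⟨t, hfin⟩) := hSS' _ hij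
      have e : (u - α • gradF u (S (I ⟨t, hfin⟩))) - (v - α • gradF v (S' (I ⟨t, hfin⟩)))
          = (u - v) - α • (gradF u (S' (I ⟨t, hfin⟩)) - gradF v (S' (I ⟨t, hfin⟩))) := by
        rw [hz, smul_sub]; abel
      calc ‖(u - α • gradF u (S (I ⟨t, hfin⟩))) - (v - α • gradF v (S' (I ⟨t, hfin⟩)))‖
          ≤ ‖u - v‖ + ‖α • (gradF u (S' (I ⟨t, hfin⟩)) - gradF v (S' (I ⟨t, hfin⟩)))‖ := by
            rw [e]; exact norm_sub_le _ _
        _ ≤ ‖u - v‖ + α * (β * ‖u - v‖) := by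
            have h1 : ‖α • (gradF u (S' (I ⟨t, hfin⟩)) - gradF v (S' (I ⟨t, hfin⟩)))‖
                ≤ α * (β * ‖u - v‖) := by
              rw [norm_smul, Real.norm_eq_abs, abs_of_pos hα]
              exact mul_le_mul_of_nonneg_left (hsmooth _ _ _) hα.le
            linarith
        _ = q * ‖u - v‖ + 2 * α * L * 0 := by rw [hq_def]; ring
  -- on A, the trajectories coincide up to t₀
  have heq : ∀ I ∈ A, ∀ t, 1 ≤ t → t ≤ t₀ → w I t = w' I t := by
    intro I hI t
    induction t with
    | zero => intro h1 _; omega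
    | succ m ih =>
      intro h1 h2
      rcases Nat.lt_or_ge m 1 with hm | hm
      · have : m = 0 := by omega
        subst this
        rw [hw1, hw1']
      · have h2' : 2 ≤ m + 1 := by omega
        have hT' : m + 1 ≤ T := by omega
        have hfin : m + 1 < T + 1 := by omega
        have hne : I ⟨m + 1, hfin⟩ ≠ j := by
          have hmem := (Finset.mem_filter.mp hI).2
          exact hmem ⟨m + 1, hfin⟩ h2' h2
        rw [hwrec I (m + 1) h2' hT', hwrec' I (m + 1) h2' hT']
        simp only [Nat.add_sub_cancel]
        rw [hSS' _ hne, ih (by omega) (by omega)]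
  -- key unrolled bound
  have key : ∀ I ∈ A, ∀ t, t₀ ≤ t → t ≤ T →
      ‖w I t - w' I t‖ ≤ 2 * α * L * ∑ s ∈ Finset.Icc (t₀ + 1) t, χ I s * q ^ (t - s) := by
    intro I hI t ht
    induction t, ht using Nat.le_induction with
    | base =>
      intro _
      rw [heq I hI t₀ (by omega) le_rfl, sub_self, norm_zero]
      rw [Finset.Icc_eq_empty (by omega), Finset.sum_empty, mul_zero]
    | succ m hm ih =>
      intro hT'
      have h1 := hstep I (m + 1) (by omega) hT'
      have h2 := ih (by omega)
      have hsum : ∑ s ∈ Finset.Icc (t₀ + 1) (m + 1), χ I s * q ^ (m + 1 - s)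
          = q * ∑ s ∈ Finset.Icc (t₀ + 1) m, χ I s * q ^ (m - s) + χ I (m + 1) := by
        rw [Finset.sum_Icc_succ_top (by omega)]
        rw [Nat.sub_self, pow_zero, mul_one]
        congr 1
        rw [Finset.mul_sum]
        apply Finset.sum_congr rfl
        intro s hs
        have hsle : s ≤ m := (Finset.mem_Icc.mp hs).2
        have he : m + 1 - s = (m - s) + 1 := by omega
        rw [he, pow_succ]
        ring
      have hχnn := hχ_nonneg I (m + 1)
      calc ‖w I (m + 1) - w' I (m + 1)‖
          ≤ q * ‖w I m - w' I m‖ + 2 * α * L * χ I (m + 1) := by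
            simpa using h1
        _ ≤ q * (2 * α * L * ∑ s ∈ Finset.Icc (t₀ + 1) m, χ I s * q ^ (m - s))
              + 2 * α * L * χ I (m + 1) := by
            have := mul_le_mul_of_nonneg_left h2 hq0.le
            linarith
        _ = 2 * α * L * (q * ∑ s ∈ Finset.Icc (t₀ + 1) m, χ I s * q ^ (m - s) + χ I (m + 1)) := by
            ring
        _ = 2 * α * L * ∑ s ∈ Finset.Icc (t₀ + 1) (m + 1), χ I s * q ^ (m + 1 - s) := by
            rw [hsum]
  -- counting lemma
  have hcount : ∀ s : Fin (T + 1), t₀ < (s : ℕ) →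
      A.card = (A.filter (fun I => I s = j)).card * n := by
    intro s hs
    set Pt : Fin (T + 1) → Finset (Fin n) := fun t =>
      if 2 ≤ (t : ℕ) ∧ (t : ℕ) ≤ t₀ then Finset.univ.erase j else Finset.univ with hPt
    have hA_eq : A = Fintype.piFinset Pt := by
      ext I
      simp only [hA_def, Finset.mem_filter, Finset.mem_univ, true_and, Fintype.mem_piFinset, hPt]
      constructor
      · intro h t
        split_ifs with ht
        · exact Finset.mem_erase.mpr ⟨h t ht.1 ht.2, Finset.mem_univ _⟩
        · exact Finset.mem_univ _
      · intro h t h2 ht0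
        have := h t
        rw [if_pos ⟨h2, ht0⟩] at this
        exact (Finset.mem_erase.mp this).1
    have hfilt_eq : A.filter (fun I => I s = j)
        = Fintype.piFinset (Function.update Pt s {j}) := by
      ext I
      simp only [Finset.mem_filter, hA_eq, Fintype.mem_piFinset]
      constructor
      · rintro ⟨h, hs'⟩ t
        by_cases hts : t = s
        · subst hts
          rw [Function.update_self]
          simpa using hs'
        · rw [Function.update_of_ne hts]
          exact h t
      · intro h
        refine ⟨fun t => ?_, ?_⟩
        · by_cases hts : t = s
          · subst hts
            simp only [hPt]
            rw [if_neg (by omega)]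
            exact Finset.mem_univ _
          · have := h t
            rwa [Function.update_of_ne hts] at this
        · have := h s
          rw [Function.update_self] at this
          exact Finset.mem_singleton.mp this
    rw [hfilt_eq, hA_eq, Fintype.card_piFinset, Fintype.card_piFinset]
    rw [← Finset.mul_prod_erase Finset.univ
      (fun i => (Function.update Pt s ({j} : Finset (Fin n)) i).card) (Finset.mem_univ s)]
    rw [← Finset.mul_prod_erase Finset.univ (fun i => (Pt i).card) (Finset.mem_univ s)]
    have h1 : (Pt s).card = n := by
      simp only [hPt]
      rw [if_neg (by omega)]
      simp
    have h2 : (Function.update Pt s ({j} : Finset (Fin n)) s).card = 1 := by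
      rw [Function.update_self]
      exact Finset.card_singleton j
    have h3 : ∏ i ∈ Finset.univ.erase s, (Function.update Pt s ({j} : Finset (Fin n)) i).card
        = ∏ i ∈ Finset.univ.erase s, (Pt i).card := by
      apply Finset.prod_congr rfl
      intro i hi
      rw [Function.update_of_ne (Finset.mem_erase.mp hi).1]
    simp only [h1, h2, h3, one_mul]
    rw [mul_comm]
  -- A is nonempty
  obtain ⟨i₀, hi₀⟩ := Fintype.exists_ne_of_one_lt_card
    (by simp only [Fintype.card_fin]; omega : 1 < Fintype.card (Fin n)) j
  have hA_mem : (fun _ : Fin (T + 1) => i₀) ∈ A := by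
    rw [hA_def, Finset.mem_filter]
    exact ⟨Finset.mem_univ _, fun t _ _ => hi₀⟩
  have hA_pos : 0 < A.card := Finset.card_pos.mpr ⟨_, hA_mem⟩
  have hA_posR : (0 : ℝ) < (A.card : ℝ) := by exact_mod_cast hA_pos
  have hnR : (0 : ℝ) < (n : ℝ) := by positivity
  -- main per-time bound
  have hmain : ∀ u : ℕ, 1 ≤ u → u ≤ T →
      ∑ I ∈ A, ‖w I u - w' I u‖ ≤ (A.card : ℝ) * (2 * L * Real.exp (c * β) / (n * β)) := by
    intro u h1 hu
    by_cases hut : u ≤ t₀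
    · have hz : ∑ I ∈ A, ‖w I u - w' I u‖ = 0 := by
        apply Finset.sum_eq_zero
        intro I hI
        rw [heq I hI u h1 hut, sub_self, norm_zero]
      rw [hz]
      positivity
    · push_neg at hut
      have hind : ∀ s ∈ Finset.Icc (t₀ + 1) u,
          ∑ I ∈ A, χ I s = (A.card : ℝ) / n := by
        intro s hs
        obtain ⟨hs1, hs2⟩ := Finset.mem_Icc.mp hs
        have hsT : s ≤ T := le_trans hs2 hu
        have hsfin : s < T + 1 := by omega
        have hχeq : ∀ I, χ I s = if I ⟨s, hsfin⟩ = j then (1 : ℝ) else 0 := by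
          intro I
          simp only [hχ_def]
          rw [dif_pos hsT]
        rw [Finset.sum_congr rfl (fun I _ => hχeq I), Finset.sum_boole]
        have hts : t₀ < s := by omega
        have hcnt := hcount ⟨s, hsfin⟩ hts
        rw [eq_div_iff (ne_of_gt hnR)]
        exact_mod_cast hcnt.symm
      have hgeom : ∑ s ∈ Finset.Icc (t₀ + 1) u, q ^ (u - s) ≤ Real.exp (c * β) / (α * β) := by
        have hre : ∑ s ∈ Finset.Icc (t₀ + 1) u, q ^ (u - s)
            = ∑ r ∈ Finset.range (u - t₀), q ^ r := by
          apply Finset.sum_nbij' (fun s => u - s) (fun r => u - r)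
          · intro a ha
            simp only [Finset.mem_Icc] at ha
            simp only [Finset.mem_range]
            omega
          · intro a ha
            simp only [Finset.mem_range] at ha
            simp only [Finset.mem_Icc]
            omega
          · intro a ha
            simp only [Finset.mem_Icc] at ha
            omega
          · intro a ha
            simp only [Finset.mem_range] at ha
            omega
          · intro a ha
            rfl
        rw [hre]
        have hαβ : (0 : ℝ) < α * β := by positivity
        have hq_sub : q - 1 = α * β := by rw [hq_def]; ring
        have heq2 : ∑ r ∈ Finset.range (u - t₀), q ^ r = (q ^ (u - t₀) - 1) / (α * β) := by
          rw [eq_div_iff (ne_of_gt hαβ), ← hq_sub]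
          exact geom_sum_mul q (u - t₀)
        rw [heq2]
        have hnum : q ^ (u - t₀) - 1 ≤ Real.exp (c * β) := by
          have := hqT (u - t₀) (by omega)
          linarith
        gcongr
      calc ∑ I ∈ A, ‖w I u - w' I u‖
          ≤ ∑ I ∈ A, 2 * α * L * ∑ s ∈ Finset.Icc (t₀ + 1) u, χ I s * q ^ (u - s) :=
            Finset.sum_le_sum (fun I hI => key I hI u hut.le hu)
        _ = 2 * α * L * ∑ s ∈ Finset.Icc (t₀ + 1) u, ((A.card : ℝ) / n) * q ^ (u - s) := by
            rw [← Finset.mul_sum]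
            congr 1
            rw [Finset.sum_comm]
            apply Finset.sum_congr rfl
            intro s hs
            rw [← Finset.sum_mul, hind s hs]
        _ = 2 * α * L * ((A.card : ℝ) / n * ∑ s ∈ Finset.Icc (t₀ + 1) u, q ^ (u - s)) := by
            simp only [Finset.mul_sum]
        _ ≤ 2 * α * L * ((A.card : ℝ) / n * (Real.exp (c * β) / (α * β))) := by
            gcongr
        _ = (A.card : ℝ) * (2 * L * Real.exp (c * β) / (n * β)) := by
            field_simp
  -- assemble
  have hkR : (0 : ℝ) < (k : ℝ) := by exact_mod_cast hk
  set B := 2 * L * Real.exp (c * β) / (n * β) with hB_def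
  have hnum : ∑ I ∈ A, ((1 : ℝ) / k) * ∑ i : Fin k, ‖w I (T - k + 1 + i) - w' I (T - k + 1 + i)‖
      ≤ (A.card : ℝ) * B := by
    calc ∑ I ∈ A, ((1 : ℝ) / k) * ∑ i : Fin k, ‖w I (T - k + 1 + i) - w' I (T - k + 1 + i)‖
        = (1 / k) * ∑ i : Fin k, ∑ I ∈ A, ‖w I (T - k + 1 + i) - w' I (T - k + 1 + i)‖ := by
          rw [← Finset.mul_sum, Finset.sum_comm]
      _ ≤ (1 / k) * ∑ _i : Fin k, (A.card : ℝ) * B := by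
          gcongr with i _
          exact hmain (T - k + 1 + i) (by omega) (by have := i.isLt; omega)
      _ = (A.card : ℝ) * B := by
          rw [Finset.sum_const, Finset.card_univ, Fintype.card_fin, nsmul_eq_mul]
          field_simp
  have hrpow : (1 : ℝ) ≤ ((T : ℝ) / (t₀ : ℝ)) ^ (c * β / k) := by
    apply Real.one_le_rpow
    · rw [le_div_iff₀ (by exact_mod_cast Nat.lt_of_lt_of_le hk ht₀ : (0:ℝ) < (t₀:ℝ))]
      rw [one_mul]
      exact_mod_cast ht₀T
    · positivity
  have hn1 : (0 : ℝ) < (n : ℝ) - 1 := by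
    have : (2 : ℝ) ≤ (n : ℝ) := by exact_mod_cast hn
    linarith
  have hBle : B ≤ (2 * L * (1 + (k : ℝ) * Real.exp (c * β)) / (((n : ℝ) - 1) * β)) *
      ((T : ℝ) / (t₀ : ℝ)) ^ (c * β / k) := by
    have hexp := Real.exp_pos (c * β)
    have hB2 : B ≤ 2 * L * (1 + (k : ℝ) * Real.exp (c * β)) / (((n : ℝ) - 1) * β) := by
      rw [hB_def, div_le_div_iff₀ (by positivity) (by positivity)]
      have hk1 : (1 : ℝ) ≤ (k : ℝ) := by exact_mod_cast hk
      have hn2 : (2 : ℝ) ≤ (n : ℝ) := by exact_mod_cast hn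
      nlinarith [mul_nonneg hL.le hβ.le,
        mul_nonneg (mul_nonneg (sub_nonneg.2 hk1) (by positivity : (0:ℝ) ≤ (n:ℝ))) hexp.le,
        hexp, (by positivity : (0:ℝ) ≤ (n:ℝ))]
    calc B ≤ 2 * L * (1 + (k : ℝ) * Real.exp (c * β)) / (((n : ℝ) - 1) * β) := hB2
      _ = (2 * L * (1 + (k : ℝ) * Real.exp (c * β)) / (((n : ℝ) - 1) * β)) * 1 := by ring
      _ ≤ _ := by
          apply mul_le_mul_of_nonneg_left hrpow
          positivity
  rw [div_le_iff₀ hA_posR]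
  calc (∑ I ∈ A, ((1 : ℝ) / k) * ∑ i : Fin k, ‖w I (T - k + 1 + i) - w' I (T - k + 1 + i)‖)
      ≤ (A.card : ℝ) * B := hnum
    _ ≤ (A.card : ℝ) * ((2 * L * (1 + (k : ℝ) * Real.exp (c * β)) / (((n : ℝ) - 1) * β)) *
          ((T : ℝ) / (t₀ : ℝ)) ^ (c * β / k)) := by
        exact mul_le_mul_of_nonneg_left hBle hA_posR.le
    _ = (2 * L * (1 + (k : ℝ) * Real.exp (c * β)) / (((n : ℝ) - 1) * β)) *
          ((T : ℝ) / (t₀ : ℝ)) ^ (c * β / k) * (A.card : ℝ) := by ring
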